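/- Let E be a symmetric Dirichlet form on L²(X,m) with associated norm-capacity cap and energy space 𝔇. Let (fₙ) be a sequence in 𝔇 admitting quasicontinuous representatives, and let f ∈ 𝔇 with ‖fₙ − f‖_𝔇 → 0. Then f admits a quasicontinuous representative, and there is a subsequence of (fₙ) converging to f pointwise quasi everywhere and quasi uniformly; that is, for every ε > 0 there is an open set U ⊆ X with cap(U) ≤ ε such that the subsequence converges to f uniformly on Uᶜ. -/

import Mathlib

/-!
Pass to a subsequence with `‖F (φ k) - G‖_𝔇 < 8⁻ᵏ`. A capacitary Chebyshev inequality,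
`cap {|g| > c} ≤ 2 ‖u‖_𝔇 / c` for a quasicontinuous representative `g` of `u`, bounds the
capacity of the set `Aₖ` where consecutive terms differ by more than `2⁻ᵏ` by `4 · 4⁻ᵏ`.
By countable subadditivity of `cap`, the tails `⋃_{j ≥ N} Aⱼ` have small capacity, and off them
the subsequence is uniformly Cauchy. So it converges quasi uniformly; the limit is then
quasicontinuous, the divergence set is polar, and the limit agrees a.e. with `G`, because polar
sets are `m`-null and an `L²`-convergent sequence has an a.e.-convergent subsequence.
-/

open scoped ENNReal
open MeasureTheory

noncomputable section

variable {X : Type*} [TopologicalSpace X] [MeasurableSpace X] [BorelSpace X]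
variable {m : Measure X} [SigmaFinite m]

/-- Convexity for an `ℝ≥0∞`-valued functional on `L²(X,m)`. -/
def IsConvexFunctional (E : Lp ℝ 2 m → ℝ≥0∞) : Prop :=
  ∀ u v : Lp ℝ 2 m, ∀ a b : ℝ, 0 ≤ a → 0 ≤ b → a + b = 1 →
    E (a • u + b • v) ≤ ENNReal.ofReal a * E u + ENNReal.ofReal b * E v

/-- The real function `s ↦ ½((s+α)₊ − (s−α)₋)` appearing in the second defining
inequality of Dirichlet forms. -/
def medTrunc (α s : ℝ) : ℝ :=
  (max (s + α) 0 - max (-(s - α)) 0) / 2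

/-- Cipriani–Grillo: a (nonlinear) Dirichlet form is a convex, lower semicontinuous
functional `E : L²(X,m) → [0,∞]` with dense effective domain satisfying the two
structural inequalities. The second one is stated for any `w ∈ L²` which is an a.e.
representative of `½((u−v+α)₊ − (u−v−α)₋)`. -/
def IsDirichletForm (E : Lp ℝ 2 m → ℝ≥0∞) : Prop :=
  IsConvexFunctional E ∧ LowerSemicontinuous E ∧ Dense {u : Lp ℝ 2 m | E u < ⊤} ∧
  (∀ u v : Lp ℝ 2 m, E (u ⊓ v) + E (u ⊔ v) ≤ E u + E v) ∧
  (∀ u v w : Lp ℝ 2 m, ∀ α : ℝ, 0 < α →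
    (∀ᵐ x ∂m, w x = medTrunc α (u x - v x)) →
    E (v + w) + E (u - w) ≤ E u + E v)

/-- `E` is symmetric: `E 0 = 0` and `E (-u) = E u`. -/
def IsSymmetricFunctional (E : Lp ℝ 2 m → ℝ≥0∞) : Prop :=
  E 0 = 0 ∧ ∀ u : Lp ℝ 2 m, E (-u) = E u

/-- `E₁ u = ‖u‖₂² + E u`. -/
def EOne (E : Lp ℝ 2 m → ℝ≥0∞) (u : Lp ℝ 2 m) : ℝ≥0∞ :=
  ENNReal.ofReal (‖u‖ ^ 2) + E u

/-- The Luxemburg-type norm `‖u‖_𝔇 = inf {λ > 0 | E₁(u/λ) ≤ 1}`, with `inf ∅ = ∞`. -/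
def Dnorm (E : Lp ℝ 2 m → ℝ≥0∞) (u : Lp ℝ 2 m) : ℝ≥0∞ :=
  sInf (ENNReal.ofReal '' {l : ℝ | 0 < l ∧ EOne E (l⁻¹ • u) ≤ 1})

/-- The Dirichlet space `𝔇 = {u ∈ L² | ‖u‖_𝔇 < ∞}`. -/
def Dspace (E : Lp ℝ 2 m → ℝ≥0∞) : Set (Lp ℝ 2 m) :=
  {u : Lp ℝ 2 m | Dnorm E u < ⊤}

/-- The norm-capacity: `cap A = inf {‖u‖_𝔇 | u ≥ 1 a.e. on an open set U ⊇ A}`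
(with `inf ∅ = ∞`). -/
def cap (E : Lp ℝ 2 m → ℝ≥0∞) (A : Set X) : ℝ≥0∞ :=
  sInf (Dnorm E '' {u : Lp ℝ 2 m |
    ∃ U : Set X, IsOpen U ∧ A ⊆ U ∧ ∀ᵐ x ∂m, x ∈ U → 1 ≤ u x})

/-- `f : X → ℝ` is quasicontinuous: for every `ε > 0` there is an open set `O` with
`cap O ≤ ε` such that the restriction of `f` to `Oᶜ` is continuous. -/
def Quasicontinuous (E : Lp ℝ 2 m → ℝ≥0∞) (f : X → ℝ) : Prop :=
  ∀ ε : ℝ, 0 < ε → ∃ O : Set X, IsOpen O ∧ cap E O ≤ ENNReal.ofReal ε ∧ ContinuousOn f Oᶜ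

end

open Filter Topology

section Dnorm

variable {X : Type*} [MeasurableSpace X] {m : Measure X} {E : Lp ℝ 2 m → ℝ≥0∞}

lemma EOne_convex (hcvx : IsConvexFunctional E) (u v : Lp ℝ 2 m) {a b : ℝ}
    (ha : 0 ≤ a) (hb : 0 ≤ b) (hab : a + b = 1) :
    EOne E (a • u + b • v) ≤ ENNReal.ofReal a * EOne E u + ENNReal.ofReal b * EOne E v := by
  have hsq : ‖a • u + b • v‖ ^ 2 ≤ a * ‖u‖ ^ 2 + b * ‖v‖ ^ 2 := by
    simpa using ((convexOn_norm convex_univ).pow (fun _ _ => norm_nonneg _) 2).2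
      (Set.mem_univ u) (Set.mem_univ v) ha hb hab
  calc EOne E (a • u + b • v)
      ≤ ENNReal.ofReal (a * ‖u‖ ^ 2 + b * ‖v‖ ^ 2) +
          (ENNReal.ofReal a * E u + ENNReal.ofReal b * E v) :=
        add_le_add (ENNReal.ofReal_le_ofReal hsq) (hcvx u v a b ha hb hab)
    _ = ENNReal.ofReal a * EOne E u + ENNReal.ofReal b * EOne E v := by
        rw [ENNReal.ofReal_add (by positivity) (by positivity), ENNReal.ofReal_mul ha,
          ENNReal.ofReal_mul hb, EOne, EOne]
        ring

lemma EOne_smul_le (hcvx : IsConvexFunctional E) (h0 : E 0 = 0) {c : ℝ} (hc0 : 0 ≤ c)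
    (hc1 : c ≤ 1) (u : Lp ℝ 2 m) : EOne E (c • u) ≤ EOne E u := by
  have hconvex := EOne_convex hcvx u 0 hc0 (sub_nonneg.2 hc1) (add_sub_cancel c 1)
  have hzero : EOne E 0 = 0 := by simp [EOne, h0]
  rw [smul_zero, add_zero, hzero, mul_zero, add_zero] at hconvex
  exact hconvex.trans (mul_le_of_le_one_left zero_le (ENNReal.ofReal_le_one.2 hc1))

lemma Dnorm_le_ofReal {u : Lp ℝ 2 m} {l : ℝ} (hl : 0 < l) (h : EOne E (l⁻¹ • u) ≤ 1) :
    Dnorm E u ≤ ENNReal.ofReal l :=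
  sInf_le ⟨l, ⟨hl, h⟩, rfl⟩

lemma EOne_inv_smul_le_one (hcvx : IsConvexFunctional E) (h0 : E 0 = 0) {u : Lp ℝ 2 m}
    {l : ℝ} (hl : 0 < l) (h : Dnorm E u < ENNReal.ofReal l) : EOne E (l⁻¹ • u) ≤ 1 := by
  obtain ⟨_, ⟨l', ⟨hl', hEl'⟩, rfl⟩, hl'l⟩ := sInf_lt_iff.1 h
  have hle : l' ≤ l := ((ENNReal.ofReal_lt_ofReal_iff hl).1 hl'l).le
  have hscale : l⁻¹ • u = (l' / l) • (l'⁻¹ • u) := by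
    rw [smul_smul]
    field_simp
  rw [hscale]
  exact (EOne_smul_le hcvx h0 (by positivity) ((div_le_one hl).2 hle) _).trans hEl'

lemma Dnorm_zero (h0 : E 0 = 0) : Dnorm E (0 : Lp ℝ 2 m) = 0 := by
  refine le_antisymm (ENNReal.le_of_forall_pos_le_add fun ε hε _ => ?_) zero_le
  simpa [EOne, h0] using Dnorm_le_ofReal (E := E) (u := 0) (NNReal.coe_pos.2 hε)

lemma Dnorm_neg (hneg : ∀ u : Lp ℝ 2 m, E (-u) = E u) (u : Lp ℝ 2 m) :
    Dnorm E (-u) = Dnorm E u := by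
  simp [Dnorm, EOne, hneg]

lemma Dnorm_add_le (hcvx : IsConvexFunctional E) (u v : Lp ℝ 2 m) :
    Dnorm E (u + v) ≤ Dnorm E u + Dnorm E v := by
  unfold Dnorm
  rw [ENNReal.sInf_add]
  refine le_iInf₂ fun _ ⟨a, ⟨ha, hEa⟩, hae⟩ => ?_
  rw [ENNReal.add_sInf]
  refine le_iInf₂ fun _ ⟨b, ⟨hb, hEb⟩, hbe⟩ => ?_
  subst hae hbe
  rw [← ENNReal.ofReal_add ha.le hb.le]
  have hab : 0 < a + b := add_pos ha hb
  refine Dnorm_le_ofReal hab ?_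
  -- `(u + v) / (a + b)` is a convex combination of `u / a` and `v / b`.
  have hsplit : (a + b)⁻¹ • (u + v) = (a / (a + b)) • (a⁻¹ • u) + (b / (a + b)) • (b⁻¹ • v) := by
    rw [smul_smul, smul_smul, smul_add]
    congr 2 <;> field_simp
  calc EOne E ((a + b)⁻¹ • (u + v))
      ≤ ENNReal.ofReal (a / (a + b)) * 1 + ENNReal.ofReal (b / (a + b)) * 1 := by
        rw [hsplit]
        refine (EOne_convex hcvx _ _ (by positivity) (by positivity) ?_).trans (by gcongr)
        field_simp
    _ = 1 := by
        rw [mul_one, mul_one, ← ENNReal.ofReal_add (by positivity) (by positivity), ← add_div,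
          div_self hab.ne', ENNReal.ofReal_one]

lemma Dnorm_sub_le (hcvx : IsConvexFunctional E) (hneg : ∀ u : Lp ℝ 2 m, E (-u) = E u)
    (u v w : Lp ℝ 2 m) : Dnorm E (u - v) ≤ Dnorm E (u - w) + Dnorm E (v - w) := by
  rw [← Dnorm_neg hneg (v - w), show u - v = (u - w) + -(v - w) by abel]
  exact Dnorm_add_le hcvx _ _

lemma Dnorm_smul_le {c : ℝ} (hc : 0 < c) (u : Lp ℝ 2 m) :
    Dnorm E (c • u) ≤ ENNReal.ofReal c * Dnorm E u := by
  have hc0 : ENNReal.ofReal c ≠ 0 := by simpa using hc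
  conv_rhs => rw [Dnorm, sInf_image, ENNReal.mul_iInf_of_ne hc0 ENNReal.ofReal_ne_top]
  refine le_iInf fun l => ?_
  rw [ENNReal.mul_iInf_of_ne hc0 ENNReal.ofReal_ne_top]
  refine le_iInf fun ⟨hl, hEl⟩ => ?_
  rw [← ENNReal.ofReal_mul hc.le]
  refine Dnorm_le_ofReal (mul_pos hc hl) ?_
  rwa [smul_smul, mul_inv, mul_comm c⁻¹, mul_assoc, inv_mul_cancel₀ hc.ne', mul_one]

lemma ofReal_norm_le_Dnorm (u : Lp ℝ 2 m) : ENNReal.ofReal ‖u‖ ≤ Dnorm E u := by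
  refine le_sInf ?_
  rintro _ ⟨l, ⟨hl, hEl⟩, rfl⟩
  have hsq : ‖l⁻¹ • u‖ ^ 2 ≤ 1 :=
    ENNReal.ofReal_le_one.1 ((le_add_of_nonneg_right zero_le).trans hEl)
  have hnorm : l⁻¹ * ‖u‖ ≤ 1 := by
    rw [norm_smul, Real.norm_of_nonneg (inv_nonneg.2 hl.le)] at hsq
    nlinarith [norm_nonneg u, inv_pos.2 hl]
  refine ENNReal.ofReal_le_ofReal ?_
  rwa [inv_mul_le_iff₀ hl, mul_one] at hnorm

lemma Dnorm_le_of_tendsto (hcvx : IsConvexFunctional E) (h0 : E 0 = 0)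
    (hlsc : LowerSemicontinuous E) {z : ℕ → Lp ℝ 2 m} {w : Lp ℝ 2 m} {C : ℝ≥0∞}
    (hz : Tendsto z atTop (𝓝 w)) (h : ∀ n, Dnorm E (z n) ≤ C) : Dnorm E w ≤ C := by
  refine le_of_forall_gt_imp_ge_of_dense fun c hc => ?_
  rcases eq_top_or_lt_top c with rfl | hc_top
  · exact le_top
  have hl : 0 < c.toReal := ENNReal.toReal_pos (pos_of_gt hc).ne' hc_top.ne
  rw [← ENNReal.ofReal_toReal hc_top.ne] at hc ⊢
  have hEOne : LowerSemicontinuous (EOne E) :=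
    (ENNReal.continuous_ofReal.comp (continuous_norm.pow 2)).lowerSemicontinuous.add hlsc
  refine Dnorm_le_ofReal hl ((hEOne.isClosed_preimage 1).mem_of_tendsto (hz.const_smul _) ?_)
  exact Eventually.of_forall fun n => EOne_inv_smul_le_one hcvx h0 hl ((h n).trans_lt hc)

lemma tendsto_of_tendsto_Dnorm_sub {F : ℕ → Lp ℝ 2 m} {G : Lp ℝ 2 m}
    (h : Tendsto (fun n => Dnorm E (F n - G)) atTop (𝓝 0)) : Tendsto F atTop (𝓝 G) := by
  rw [tendsto_iff_edist_tendsto_0]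
  refine tendsto_of_tendsto_of_tendsto_of_le_of_le tendsto_const_nhds h (fun _ => zero_le)
    fun n => ?_
  rw [edist_eq_enorm_sub, ← ofReal_norm]
  exact ofReal_norm_le_Dnorm _

lemma summable_of_tsum_Dnorm_ne_top {v : ℕ → Lp ℝ 2 m} (hv : ∑' n, Dnorm E (v n) ≠ ⊤) :
    Summable v := by
  refine Summable.of_norm_bounded (ENNReal.summable_toReal hv) fun n => ?_
  exact (ENNReal.ofReal_le_iff_le_toReal (ne_top_of_le_ne_top hv (ENNReal.le_tsum n))).1
    (ofReal_norm_le_Dnorm (v n))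

lemma Dnorm_tsum_le (hcvx : IsConvexFunctional E) (h0 : E 0 = 0)
    (hlsc : LowerSemicontinuous E) {v : ℕ → Lp ℝ 2 m} (hv : Summable v) :
    Dnorm E (∑' n, v n) ≤ ∑' n, Dnorm E (v n) :=
  Dnorm_le_of_tendsto hcvx h0 hlsc hv.hasSum.tendsto_sum_nat fun _ =>
    (Finset.le_sum_of_subadditive _ (Dnorm_zero h0).le (Dnorm_add_le hcvx) _ _).trans
      (ENNReal.sum_le_tsum _)

lemma smul_sup_zero {c : ℝ} (hc : 0 ≤ c) (u : Lp ℝ 2 m) : c • (u ⊔ 0) = (c • u) ⊔ 0 := by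
  refine Lp.ext ?_
  filter_upwards [Lp.coeFn_sup u 0, Lp.coeFn_sup (c • u) 0, Lp.coeFn_smul c u,
    Lp.coeFn_smul c (u ⊔ 0), Lp.coeFn_zero ℝ 2 m] with x h1 h2 h3 h4 h5
  simp only [h1, h2, h3, h4, h5, Pi.smul_apply, Pi.sup_apply, Pi.zero_apply, smul_eq_mul,
    mul_max_of_nonneg _ _ hc, mul_zero]

lemma Dnorm_sup_zero_le (hpos : ∀ u : Lp ℝ 2 m, E (u ⊔ 0) ≤ E u) (u : Lp ℝ 2 m) :
    Dnorm E (u ⊔ 0) ≤ Dnorm E u := by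
  refine sInf_le_sInf (Set.image_mono fun l ⟨hl, hEl⟩ => ⟨hl, le_trans ?_ hEl⟩)
  rw [smul_sup_zero (inv_nonneg.2 hl.le)]
  refine add_le_add (ENNReal.ofReal_le_ofReal ?_) (hpos _)
  gcongr
  simpa using norm_sup_sub_sup_le_norm (l⁻¹ • u) 0 0

lemma measure_le_Dnorm_sq {A : Set X} {u : Lp ℝ 2 m} (hu : ∀ᵐ x ∂m, x ∈ A → 1 ≤ u x) :
    m A ≤ Dnorm E u ^ 2 := by
  have hA : A ≤ᵐ[m] {x | 1 ≤ ‖u x‖ₑ} := by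
    filter_upwards [hu] with x hx hxA
    change 1 ≤ ‖u x‖ₑ
    rw [Real.enorm_eq_ofReal_abs, ENNReal.one_le_ofReal]
    exact (hx hxA).trans (le_abs_self _)
  have hcheb := mul_meas_ge_le_pow_eLpNorm' m two_ne_zero ENNReal.ofNat_ne_top
    (Lp.aestronglyMeasurable u) 1
  simp only [ENNReal.toReal_ofNat, ENNReal.rpow_ofNat, one_pow, one_mul] at hcheb
  calc m A ≤ m {x | 1 ≤ ‖u x‖ₑ} := measure_mono_ae hA
    _ ≤ eLpNorm u 2 m ^ 2 := hcheb
    _ = ENNReal.ofReal ‖u‖ ^ 2 := by rw [ofReal_norm, Lp.enorm_def]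
    _ ≤ Dnorm E u ^ 2 := by gcongr; exact ofReal_norm_le_Dnorm u

end Dnorm

section Capacity

variable {X : Type*} [TopologicalSpace X] [MeasurableSpace X] {m : Measure X}
  {E : Lp ℝ 2 m → ℝ≥0∞}

lemma cap_le_Dnorm {A U : Set X} {u : Lp ℝ 2 m} (hU : IsOpen U) (hAU : A ⊆ U)
    (hu : ∀ᵐ x ∂m, x ∈ U → 1 ≤ u x) : cap E A ≤ Dnorm E u :=
  sInf_le ⟨u, ⟨U, hU, hAU, hu⟩, rfl⟩

lemma exists_Dnorm_lt_of_cap_lt {A : Set X} {c : ℝ≥0∞} (h : cap E A < c) :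
    ∃ u : Lp ℝ 2 m, ∃ U : Set X, IsOpen U ∧ A ⊆ U ∧ (∀ᵐ x ∂m, x ∈ U → 1 ≤ u x) ∧
      Dnorm E u < c := by
  obtain ⟨_, ⟨u, ⟨U, hU, hAU, hu⟩, rfl⟩, hDu⟩ := sInf_lt_iff.1 h
  exact ⟨u, U, hU, hAU, hu, hDu⟩

lemma exists_isOpen_superset_cap_lt {A : Set X} {c : ℝ≥0∞} (h : cap E A < c) :
    ∃ U : Set X, IsOpen U ∧ A ⊆ U ∧ cap E U < c := by
  obtain ⟨u, U, hU, hAU, hu, hDu⟩ := exists_Dnorm_lt_of_cap_lt h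
  exact ⟨U, hU, hAU, (cap_le_Dnorm hU subset_rfl hu).trans_lt hDu⟩

lemma cap_mono {A B : Set X} (h : A ⊆ B) : cap E A ≤ cap E B :=
  sInf_le_sInf (Set.image_mono fun _ ⟨U, hU, hBU, hu⟩ => ⟨U, hU, h.trans hBU, hu⟩)

lemma measure_eq_zero_of_cap_eq_zero {A : Set X} (h : cap E A = 0) : m A = 0 := by
  have hbound : ∀ n : ℕ, m A ≤ ((n : ℝ≥0∞)⁻¹) ^ 2 := fun n => by
    obtain ⟨u, U, -, hAU, hu, hDu⟩ :=
      exists_Dnorm_lt_of_cap_lt (E := E) (h ▸ ENNReal.inv_pos.2 (ENNReal.natCast_ne_top n))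
    exact (measure_le_Dnorm_sq (hu.mono fun x hx hxA => hx (hAU hxA))).trans (by gcongr)
  have hlim : Tendsto (fun n : ℕ => ((n : ℝ≥0∞)⁻¹) ^ 2) atTop (𝓝 0) := by
    simpa [Function.comp_def] using
      ((ENNReal.continuous_pow 2).tendsto 0).comp ENNReal.tendsto_inv_nat_nhds_zero
  exact le_antisymm (ge_of_tendsto' hlim hbound) zero_le

lemma cap_le_Dnorm_add (hcvx : IsConvexFunctional E) (hpos : ∀ u : Lp ℝ 2 m, E (u ⊔ 0) ≤ E u)
    {A U V : Set X} {u v : Lp ℝ 2 m} (hU : IsOpen U) (hV : IsOpen V) (hA : A ⊆ U ∪ V)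
    (hu : ∀ᵐ x ∂m, x ∈ U → x ∉ V → 1 ≤ u x) (hv : ∀ᵐ x ∂m, x ∈ V → 1 ≤ v x) :
    cap E A ≤ Dnorm E u + Dnorm E v := by
  have hleu : u ≤ u ⊔ 0 + v ⊔ 0 := le_add_of_le_of_nonneg le_sup_left le_sup_right
  have hlev : v ≤ u ⊔ 0 + v ⊔ 0 := le_add_of_nonneg_of_le le_sup_right le_sup_left
  calc cap E A ≤ Dnorm E (u ⊔ 0 + v ⊔ 0) := by
        refine cap_le_Dnorm (hU.union hV) hA ?_
        filter_upwards [hu, hv, (Lp.coeFn_le _ _).2 hleu, (Lp.coeFn_le _ _).2 hlev]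
          with x hux hvx hleux hlevx hx
        by_cases hxV : x ∈ V
        · exact (hvx hxV).trans hlevx
        · exact (hux (hx.resolve_right hxV) hxV).trans hleux
    _ ≤ Dnorm E (u ⊔ 0) + Dnorm E (v ⊔ 0) := Dnorm_add_le hcvx _ _
    _ ≤ Dnorm E u + Dnorm E v := add_le_add (Dnorm_sup_zero_le hpos u) (Dnorm_sup_zero_le hpos v)

lemma cap_union_le (hcvx : IsConvexFunctional E) (hpos : ∀ u : Lp ℝ 2 m, E (u ⊔ 0) ≤ E u)
    (A B : Set X) : cap E (A ∪ B) ≤ cap E A + cap E B := by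
  conv_rhs => unfold cap
  rw [ENNReal.sInf_add]
  refine le_iInf₂ fun _ ⟨u, ⟨U, hU, hAU, hu⟩, hDu⟩ => ?_
  rw [ENNReal.add_sInf]
  refine le_iInf₂ fun _ ⟨v, ⟨V, hV, hBV, hv⟩, hDv⟩ => ?_
  subst hDu hDv
  exact cap_le_Dnorm_add hcvx hpos hU hV (Set.union_subset_union hAU hBV)
    (hu.mono fun x hx hxU _ => hx hxU) hv

lemma cap_iUnion_le (hcvx : IsConvexFunctional E) (h0 : E 0 = 0)
    (hpos : ∀ u : Lp ℝ 2 m, E (u ⊔ 0) ≤ E u) (hlsc : LowerSemicontinuous E) (A : ℕ → Set X) :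
    cap E (⋃ n, A n) ≤ ∑' n, cap E (A n) := by
  refine ENNReal.le_of_forall_pos_le_add fun ε hε hfin => ?_
  obtain ⟨δ, hδ, hδsum⟩ := ENNReal.exists_pos_sum_of_countable (ENNReal.coe_ne_zero.2 hε.ne') ℕ
  have hadm : ∀ n, ∃ u : Lp ℝ 2 m, ∃ U : Set X, IsOpen U ∧ A n ⊆ U ∧
      (∀ᵐ x ∂m, x ∈ U → 1 ≤ u x) ∧ Dnorm E u < cap E (A n) + δ n := fun n =>
    exists_Dnorm_lt_of_cap_lt (ENNReal.lt_add_right ((ENNReal.le_tsum n).trans_lt hfin).ne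
      (ENNReal.coe_ne_zero.2 (hδ n).ne'))
  choose u U hU hAU hu hDu using hadm
  -- The positive parts `(u n)⁺` can be summed in `L²`, and the sum is admissible for `⋃ U n`.
  have hDsum : ∑' n, Dnorm E (u n ⊔ 0) ≤ ∑' n, cap E (A n) + ε :=
    calc ∑' n, Dnorm E (u n ⊔ 0) ≤ ∑' n, (cap E (A n) + δ n) :=
          ENNReal.tsum_le_tsum fun n => (Dnorm_sup_zero_le hpos _).trans (hDu n).le
      _ = ∑' n, cap E (A n) + ∑' n, (δ n : ℝ≥0∞) := ENNReal.tsum_add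
      _ ≤ ∑' n, cap E (A n) + ε := add_le_add_right hδsum.le _
  have hsum : Summable fun n => u n ⊔ 0 :=
    summable_of_tsum_Dnorm_ne_top (ne_top_of_le_ne_top (by finiteness) hDsum)
  have hle : ∀ n, u n ≤ ∑' k, u k ⊔ 0 := fun n =>
    le_sup_left.trans (hsum.le_tsum n fun _ _ => le_sup_right)
  refine (cap_le_Dnorm (isOpen_iUnion hU) (Set.iUnion_mono hAU) ?_).trans
    ((Dnorm_tsum_le hcvx h0 hlsc hsum).trans hDsum)
  filter_upwards [ae_all_iff.2 hu, ae_all_iff.2 fun n => (Lp.coeFn_le _ _).2 (hle n)]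
    with x hux hlex hx
  obtain ⟨n, hn⟩ := Set.mem_iUnion.1 hx
  exact (hux n hn).trans (hlex n)

end Capacity

section Quasicontinuity

variable {X : Type*} [TopologicalSpace X] [MeasurableSpace X] {m : Measure X}
  {E : Lp ℝ 2 m → ℝ≥0∞}

lemma Continuous.comp_quasicontinuous {h : ℝ → ℝ} (hh : Continuous h) {g : X → ℝ}
    (hg : Quasicontinuous E g) : Quasicontinuous E fun x => h (g x) := fun ε hε =>
  let ⟨O, hO, hcap, hgO⟩ := hg ε hε
  ⟨O, hO, hcap, hh.comp_continuousOn hgO⟩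

lemma Quasicontinuous.sub (hcvx : IsConvexFunctional E)
    (hpos : ∀ u : Lp ℝ 2 m, E (u ⊔ 0) ≤ E u) {f g : X → ℝ} (hf : Quasicontinuous E f)
    (hg : Quasicontinuous E g) : Quasicontinuous E fun x => f x - g x := by
  intro ε hε
  obtain ⟨O₁, hO₁, hcap₁, hfO₁⟩ := hf (ε / 2) (half_pos hε)
  obtain ⟨O₂, hO₂, hcap₂, hgO₂⟩ := hg (ε / 2) (half_pos hε)
  refine ⟨O₁ ∪ O₂, hO₁.union hO₂, ?_, ?_⟩
  · calc cap E (O₁ ∪ O₂) ≤ cap E O₁ + cap E O₂ := cap_union_le hcvx hpos _ _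
      _ ≤ ENNReal.ofReal (ε / 2) + ENNReal.ofReal (ε / 2) := add_le_add hcap₁ hcap₂
      _ = ENNReal.ofReal ε := by
          rw [← ENNReal.ofReal_add (half_pos hε).le (half_pos hε).le, add_halves]
  · rw [Set.compl_union]
    exact (hfO₁.mono Set.inter_subset_left).sub (hgO₂.mono Set.inter_subset_right)

lemma cap_setOf_one_lt_le (hcvx : IsConvexFunctional E)
    (hpos : ∀ u : Lp ℝ 2 m, E (u ⊔ 0) ≤ E u) {u : Lp ℝ 2 m} {g : X → ℝ}
    (hg : Quasicontinuous E g) (hug : ∀ᵐ x ∂m, u x = g x) :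
    cap E {x | 1 < g x} ≤ Dnorm E u := by
  refine ENNReal.le_of_forall_pos_le_add fun ε hε _ => ?_
  have hε' : (0 : ℝ) < ε := NNReal.coe_pos.2 hε
  obtain ⟨O, hO, hOcap, hgO⟩ := hg (ε / 2) (half_pos hε')
  have hOε : cap E O < ε := by
    refine hOcap.trans_lt ?_
    rw [← ENNReal.ofReal_coe_nnreal, ENNReal.ofReal_lt_ofReal_iff hε']
    exact half_lt_self hε'
  obtain ⟨v, V, hV, hOV, hv, hDv⟩ := exists_Dnorm_lt_of_cap_lt hOε
  -- Off `O`, the set `{1 < g}` is the trace of an open set `W`.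
  obtain ⟨W, hW, hWO⟩ := continuousOn_iff'.1 hgO (Set.Ioi 1) isOpen_Ioi
  have hmemW : ∀ x ∉ O, 1 < g x ↔ x ∈ W := fun x hx => by
    simpa [hx] using Set.ext_iff.1 hWO x
  refine (cap_le_Dnorm_add hcvx hpos hW hV ?_ ?_ hv).trans (by gcongr)
  · intro x hx
    by_cases hxO : x ∈ O
    · exact Or.inr (hOV hxO)
    · exact Or.inl ((hmemW x hxO).1 hx)
  · filter_upwards [hug] with x hx hxW hxV
    rw [hx]
    exact ((hmemW x fun hxO => hxV (hOV hxO)).2 hxW).le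

lemma cap_setOf_lt_abs_le (hcvx : IsConvexFunctional E) (hneg : ∀ u : Lp ℝ 2 m, E (-u) = E u)
    (hpos : ∀ u : Lp ℝ 2 m, E (u ⊔ 0) ≤ E u) {u : Lp ℝ 2 m} {g : X → ℝ}
    (hg : Quasicontinuous E g) (hug : ∀ᵐ x ∂m, u x = g x) {c : ℝ} (hc : 0 < c) :
    cap E {x | c < |g x|} ≤ 2 * ENNReal.ofReal c⁻¹ * Dnorm E u := by
  have hsplit : {x | c < |g x|} = {x | 1 < c⁻¹ * g x} ∪ {x | 1 < c⁻¹ * -g x} := by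
    ext x
    simp only [Set.mem_ofPred_eq, Set.mem_union, lt_abs, lt_inv_mul_iff₀ hc, mul_one]
  have hpos_part : cap E {x | 1 < c⁻¹ * g x} ≤ Dnorm E (c⁻¹ • u) := by
    refine cap_setOf_one_lt_le hcvx hpos ((continuous_const_mul _).comp_quasicontinuous hg) ?_
    filter_upwards [hug, Lp.coeFn_smul c⁻¹ u] with x hx hsmul
    rw [hsmul, Pi.smul_apply, hx, smul_eq_mul]
  have hneg_part : cap E {x | 1 < c⁻¹ * -g x} ≤ Dnorm E (c⁻¹ • -u) := by
    refine cap_setOf_one_lt_le hcvx hpos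
      ((continuous_const_mul _).comp_quasicontinuous (continuous_neg.comp_quasicontinuous hg)) ?_
    filter_upwards [hug, Lp.coeFn_smul c⁻¹ (-u), Lp.coeFn_neg u] with x hx hsmul hneg
    rw [hsmul, Pi.smul_apply, hneg, Pi.neg_apply, hx, smul_eq_mul]
  calc cap E {x | c < |g x|}
      ≤ Dnorm E (c⁻¹ • u) + Dnorm E (c⁻¹ • -u) := by
        rw [hsplit]
        exact (cap_union_le hcvx hpos _ _).trans (add_le_add hpos_part hneg_part)
    _ = 2 * Dnorm E (c⁻¹ • u) := by rw [smul_neg, Dnorm_neg hneg, two_mul]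
    _ ≤ 2 * ENNReal.ofReal c⁻¹ * Dnorm E u := by
        rw [mul_assoc]
        gcongr
        exact Dnorm_smul_le (inv_pos.2 hc) u

end Quasicontinuity

lemma dist_limUnder_le_of_dist_succ_le {α : Type*} [PseudoMetricSpace α] [CompleteSpace α]
    [Nonempty α] {v : ℕ → α} {N : ℕ} (h : ∀ k ≥ N, dist (v k) (v (k + 1)) ≤ 2⁻¹ ^ k) :
    ∀ k ≥ N, dist (v k) (limUnder atTop v) ≤ 2 * 2⁻¹ ^ k := by
  intro k hk
  have hshift : ∀ n, dist (v (n + k)) (v (n + 1 + k)) ≤ 2⁻¹ ^ k * 2⁻¹ ^ n := fun n => by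
    simpa [pow_add, mul_comm, add_right_comm] using h (n + k) (by omega)
  have hcauchy : CauchySeq v :=
    (cauchySeq_shift k).1 (cauchySeq_of_le_geometric 2⁻¹ _ (by norm_num) hshift)
  have hlim : Tendsto (fun n => v (n + k)) atTop (𝓝 (limUnder atTop v)) :=
    (tendsto_add_atTop_iff_nat k).2 (tendsto_nhds_limUnder (cauchySeq_tendsto_of_complete hcauchy))
  have hdist := dist_le_of_le_geometric_of_tendsto₀ _ _ (by norm_num) hshift hlim
  norm_num at hdist
  linarith

lemma tendstoUniformlyOn_limUnder_of_dist_succ_le {β α : Type*} [PseudoMetricSpace α]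
    [CompleteSpace α] [Nonempty α] {u : ℕ → β → α} {S : Set β} {N : ℕ}
    (h : ∀ x ∈ S, ∀ k ≥ N, dist (u k x) (u (k + 1) x) ≤ 2⁻¹ ^ k) :
    TendstoUniformlyOn u (fun x => limUnder atTop (u · x)) atTop S := by
  rw [Metric.tendstoUniformlyOn_iff]
  intro δ hδ
  have hlim : Tendsto (fun k => 2 * (2⁻¹ : ℝ) ^ k) atTop (𝓝 0) := by
    simpa using (tendsto_pow_atTop_nhds_zero_of_lt_one (r := (2⁻¹ : ℝ)) (by norm_num)
      (by norm_num)).const_mul 2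
  filter_upwards [hlim.eventually_lt_const hδ, eventually_ge_atTop N] with k hkδ hkN x hx
  rw [dist_comm]
  exact (dist_limUnder_le_of_dist_succ_le (h x hx) k hkN).trans_lt hkδ

section QuasiUniform

variable {X : Type*} [TopologicalSpace X] [MeasurableSpace X] {m : Measure X}
  {E : Lp ℝ 2 m → ℝ≥0∞}

def TendstoQuasiUniformly (E : Lp ℝ 2 m → ℝ≥0∞) (u : ℕ → X → ℝ) (g : X → ℝ) : Prop :=
  ∀ ε : ℝ, 0 < ε → ∃ U : Set X, IsOpen U ∧ cap E U ≤ ENNReal.ofReal ε ∧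
    TendstoUniformlyOn u g atTop Uᶜ

lemma TendstoQuasiUniformly.cap_setOf_not_tendsto_eq_zero {u : ℕ → X → ℝ} {g : X → ℝ}
    (h : TendstoQuasiUniformly E u g) :
    cap E {x | ¬ Tendsto (fun k => u k x) atTop (𝓝 (g x))} = 0 := by
  refine le_antisymm (ENNReal.le_of_forall_pos_le_add fun ε hε _ => ?_) zero_le
  obtain ⟨U, -, hUcap, hunif⟩ := h ε hε
  rw [zero_add, ← ENNReal.ofReal_coe_nnreal]
  refine (cap_mono fun x hx => ?_).trans hUcap
  by_contra hxU
  exact hx (hunif.tendsto_at hxU)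

lemma TendstoQuasiUniformly.quasicontinuous (hcvx : IsConvexFunctional E) (h0 : E 0 = 0)
    (hpos : ∀ u : Lp ℝ 2 m, E (u ⊔ 0) ≤ E u) (hlsc : LowerSemicontinuous E)
    {u : ℕ → X → ℝ} {g : X → ℝ} (hu : ∀ k, Quasicontinuous E (u k))
    (h : TendstoQuasiUniformly E u g) : Quasicontinuous E g := by
  intro ε hε
  obtain ⟨U, hU, hUcap, hunif⟩ := h (ε / 2) (half_pos hε)
  obtain ⟨δ, hδ, hδsum⟩ := ENNReal.exists_pos_sum_of_countable
    (ENNReal.ofReal_pos.2 (half_pos hε)).ne' ℕ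
  choose O hO hOcap huO using fun k => hu k (δ k) (NNReal.coe_pos.2 (hδ k))
  refine ⟨U ∪ ⋃ k, O k, hU.union (isOpen_iUnion hO), ?_, ?_⟩
  · calc cap E (U ∪ ⋃ k, O k) ≤ cap E U + ∑' k, cap E (O k) :=
          (cap_union_le hcvx hpos _ _).trans (by gcongr; exact cap_iUnion_le hcvx h0 hpos hlsc O)
      _ ≤ ENNReal.ofReal (ε / 2) + ENNReal.ofReal (ε / 2) := by
          gcongr
          refine (ENNReal.tsum_le_tsum fun k => ?_).trans hδsum.le
          simpa using hOcap k
      _ = ENNReal.ofReal ε := by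
          rw [← ENNReal.ofReal_add (half_pos hε).le (half_pos hε).le, add_halves]
  · refine (hunif.mono (Set.compl_subset_compl.2 Set.subset_union_left)).continuousOn
      (Frequently.of_forall fun k => (huO k).mono (Set.compl_subset_compl.2 ?_))
    exact (Set.subset_iUnion O k).trans Set.subset_union_right

lemma tendstoQuasiUniformly_limUnder (hcvx : IsConvexFunctional E) (h0 : E 0 = 0)
    (hpos : ∀ u : Lp ℝ 2 m, E (u ⊔ 0) ≤ E u) (hlsc : LowerSemicontinuous E)
    {u : ℕ → X → ℝ} (h : ∑' k, cap E {x | 2⁻¹ ^ k < |u (k + 1) x - u k x|} ≠ ⊤) :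
    TendstoQuasiUniformly E u fun x => limUnder atTop (u · x) := by
  intro ε hε
  set A : ℕ → Set X := fun k => {x | 2⁻¹ ^ k < |u (k + 1) x - u k x|}
  obtain ⟨N, hN⟩ := ((ENNReal.tendsto_sum_nat_add _ h).eventually
    (gt_mem_nhds (ENNReal.ofReal_pos.2 hε))).exists
  obtain ⟨V, hV, hAV, hVcap⟩ := exists_isOpen_superset_cap_lt
    ((cap_iUnion_le hcvx h0 hpos hlsc fun j => A (j + N)).trans_lt hN)
  refine ⟨V, hV, hVcap.le, tendstoUniformlyOn_limUnder_of_dist_succ_le (N := N) ?_⟩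
  intro x hxV k hk
  have hxA : x ∉ A k := fun hxA =>
    hxV (hAV (Set.mem_iUnion.2 ⟨k - N, by rwa [Nat.sub_add_cancel hk]⟩))
  simpa [A, Real.dist_eq, abs_sub_comm] using hxA

end QuasiUniform

section Limit

variable {X : Type*} [TopologicalSpace X] [MeasurableSpace X] {m : Measure X}
  {E : Lp ℝ 2 m → ℝ≥0∞}

lemma ae_eq_of_tendsto_of_cap_eq_zero {F : ℕ → Lp ℝ 2 m} {G : Lp ℝ 2 m} {f : ℕ → X → ℝ}
    {g : X → ℝ} (hF : Tendsto F atTop (𝓝 G)) (hrep : ∀ n, ∀ᵐ x ∂m, F n x = f n x)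
    (hcap : cap E {x | ¬ Tendsto (fun n => f n x) atTop (𝓝 (g x))} = 0) :
    ∀ᵐ x ∂m, G x = g x := by
  obtain ⟨ns, hns, hae⟩ := (tendstoInMeasure_of_tendsto_Lp hF).exists_seq_tendsto_ae
  have hqe : ∀ᵐ x ∂m, Tendsto (fun n => f n x) atTop (𝓝 (g x)) :=
    ae_iff.2 (measure_eq_zero_of_cap_eq_zero hcap)
  filter_upwards [hae, ae_all_iff.2 hrep, hqe] with x hFx hrepx hfx
  refine tendsto_nhds_unique hFx ?_
  exact (hfx.comp hns.tendsto_atTop).congr fun i => (hrepx (ns i)).symm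

lemma exists_strictMono_tsum_cap_ne_top (hcvx : IsConvexFunctional E)
    (hneg : ∀ u : Lp ℝ 2 m, E (-u) = E u) (hpos : ∀ u : Lp ℝ 2 m, E (u ⊔ 0) ≤ E u)
    {F : ℕ → Lp ℝ 2 m} {f : ℕ → X → ℝ} {G : Lp ℝ 2 m} (hqc : ∀ n, Quasicontinuous E (f n))
    (hrep : ∀ n, ∀ᵐ x ∂m, F n x = f n x)
    (hconv : Tendsto (fun n => Dnorm E (F n - G)) atTop (𝓝 0)) :
    ∃ φ : ℕ → ℕ, StrictMono φ ∧
      ∑' k, cap E {x | 2⁻¹ ^ k < |f (φ (k + 1)) x - f (φ k) x|} ≠ ⊤ := by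
  obtain ⟨φ, hφ, hφG⟩ := extraction_forall_of_eventually fun k : ℕ =>
    hconv.eventually (gt_mem_nhds (ENNReal.ofReal_pos.2 (pow_pos (by norm_num : (0 : ℝ) < 8⁻¹) k)))
  have hcap : ∀ k, cap E {x | 2⁻¹ ^ k < |f (φ (k + 1)) x - f (φ k) x|}
      ≤ ENNReal.ofReal (4 * 4⁻¹ ^ k) := by
    intro k
    have hdiff : ∀ᵐ x ∂m, (F (φ (k + 1)) - F (φ k)) x = f (φ (k + 1)) x - f (φ k) x := by
      filter_upwards [hrep (φ (k + 1)), hrep (φ k), Lp.coeFn_sub (F (φ (k + 1))) (F (φ k))]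
        with x h1 h2 h3
      rw [h3, Pi.sub_apply, h1, h2]
    calc _ ≤ 2 * ENNReal.ofReal (2⁻¹ ^ k)⁻¹ * Dnorm E (F (φ (k + 1)) - F (φ k)) :=
          cap_setOf_lt_abs_le hcvx hneg hpos ((hqc _).sub hcvx hpos (hqc _)) hdiff (by positivity)
      _ ≤ 2 * ENNReal.ofReal (2 ^ k) *
            (ENNReal.ofReal (8⁻¹ ^ (k + 1)) + ENNReal.ofReal (8⁻¹ ^ k)) := by
          rw [inv_pow, inv_inv]
          gcongr
          exact (Dnorm_sub_le hcvx hneg _ _ G).trans (add_le_add (hφG _).le (hφG k).le)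
      _ ≤ ENNReal.ofReal (4 * 4⁻¹ ^ k) := by
          rw [← ENNReal.ofReal_add (by positivity) (by positivity), ← ENNReal.ofReal_ofNat 2,
            ← ENNReal.ofReal_mul (by norm_num), ← ENNReal.ofReal_mul (by positivity)]
          refine ENNReal.ofReal_le_ofReal ?_
          have h48 : (4⁻¹ : ℝ) ^ k = 2 ^ k * 8⁻¹ ^ k := by rw [← mul_pow]; norm_num
          rw [h48, pow_succ]
          nlinarith [mul_pos (pow_pos (by norm_num : (0 : ℝ) < 2) k)
            (pow_pos (by norm_num : (0 : ℝ) < 8⁻¹) k)]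
  have hsummable : Summable fun k : ℕ => 4 * (4⁻¹ : ℝ) ^ k :=
    (summable_geometric_of_lt_one (by norm_num) (by norm_num)).mul_left 4
  refine ⟨φ, hφ, ne_top_of_le_ne_top ENNReal.ofReal_ne_top ((ENNReal.tsum_le_tsum hcap).trans_eq
    (ENNReal.ofReal_tsum_of_nonneg (fun k => by positivity) hsummable).symm)⟩

end Limit

variable {X : Type*} [TopologicalSpace X] [MeasurableSpace X] [BorelSpace X]
variable {m : Measure X} [SigmaFinite m]

theorem quasicontinuous_limit_general
    (E : Lp ℝ 2 m → ℝ≥0∞) (hE : IsDirichletForm E) (hsym : IsSymmetricFunctional E)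
    (F : ℕ → Lp ℝ 2 m)
    (f : ℕ → X → ℝ) (hqc : ∀ n, Quasicontinuous E (f n))
    (hrep : ∀ n, ∀ᵐ x ∂m, F n x = f n x)
    (G : Lp ℝ 2 m)
    (hconv : Filter.Tendsto (fun n => Dnorm E (F n - G)) Filter.atTop (nhds 0)) :
    ∃ g : X → ℝ, Quasicontinuous E g ∧ (∀ᵐ x ∂m, G x = g x) ∧
      ∃ φ : ℕ → ℕ, StrictMono φ ∧
        cap E {x : X | ¬ Filter.Tendsto (fun k => f (φ k) x) Filter.atTop (nhds (g x))} = 0 ∧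
        ∀ ε : ℝ, 0 < ε → ∃ U : Set X, IsOpen U ∧ cap E U ≤ ENNReal.ofReal ε ∧
          TendstoUniformlyOn (fun k => f (φ k)) g Filter.atTop Uᶜ := by
  obtain ⟨hcvx, hlsc, -, hlat, -⟩ := hE
  obtain ⟨h0, hneg⟩ := hsym
  have hpos : ∀ u, E (u ⊔ 0) ≤ E u := fun u => by
    simpa [h0] using le_add_self.trans (hlat u 0)
  obtain ⟨φ, hφ, hsum⟩ := exists_strictMono_tsum_cap_ne_top hcvx hneg hpos hqc hrep hconv
  have hunif : TendstoQuasiUniformly E (fun k => f (φ k)) fun x =>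
      limUnder atTop fun k => f (φ k) x :=
    tendstoQuasiUniformly_limUnder hcvx h0 hpos hlsc hsum
  have hpolar := hunif.cap_setOf_not_tendsto_eq_zero
  refine ⟨_, hunif.quasicontinuous hcvx h0 hpos hlsc fun k => hqc (φ k), ?_, φ, hφ, hpolar, hunif⟩
  exact ae_eq_of_tendsto_of_cap_eq_zero
    ((tendsto_of_tendsto_Dnorm_sub hconv).comp hφ.tendsto_atTop) (fun k => hrep (φ k)) hpolar

/-- If `fₙ → f` in `𝔇` and each `fₙ` has a quasicontinuous representative, then `f` has a
quasicontinuous representative and a subsequence converges to it pointwise quasi everywhere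
and quasi uniformly. -/
theorem quasicontinuous_limit
    (hsupp : ∀ U : Set X, IsOpen U → U.Nonempty → 0 < m U)
    (E : Lp ℝ 2 m → ℝ≥0∞) (hE : IsDirichletForm E) (hsym : IsSymmetricFunctional E)
    (F : ℕ → Lp ℝ 2 m) (hF : ∀ n, F n ∈ Dspace E)
    (f : ℕ → X → ℝ) (hqc : ∀ n, Quasicontinuous E (f n))
    (hrep : ∀ n, ∀ᵐ x ∂m, F n x = f n x)
    (G : Lp ℝ 2 m) (hG : G ∈ Dspace E)
    (hconv : Filter.Tendsto (fun n => Dnorm E (F n - G)) Filter.atTop (nhds 0)) :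
    ∃ g : X → ℝ, Quasicontinuous E g ∧ (∀ᵐ x ∂m, G x = g x) ∧
      ∃ φ : ℕ → ℕ, StrictMono φ ∧
        cap E {x : X | ¬ Filter.Tendsto (fun k => f (φ k) x) Filter.atTop (nhds (g x))} = 0 ∧
        ∀ ε : ℝ, 0 < ε → ∃ U : Set X, IsOpen U ∧ cap E U ≤ ENNReal.ofReal ε ∧
          TendstoUniformlyOn (fun k => f (φ k)) g Filter.atTop Uᶜ :=
  quasicontinuous_limit_general E hE hsym F f hqc hrep G hconv
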